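/- arXiv:2402.03226 — 2 statements merged into one kernel-verified Lean document; each statement's English description precedes it below -/
import Mathlib

section
/- Finite mixtures with distinct exponential-distance envelope functions are linearly independent: if W_1, ..., W_k ∈ R^d are pairwise distinct, then the functions g_i(X) := exp(-‖W_i - X‖), i = 1,...,k, are linearly independent as functions on R^d. -/
/-- If `t ↦ c * exp (-|t|)` is differentiable at `0`, then `c = 0`. -/
lemma aux_c_zero (c : ℝ) (hd : DifferentiableAt ℝ (fun t : ℝ => c * Real.exp (-|t|)) 0) :
    c = 0 := by
  by_contra hc
  have h1 : DifferentiableAt ℝ (fun t : ℝ => Real.exp (-|t|)) 0 := by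
    have := hd.const_mul c⁻¹
    simpa [mul_comm, inv_mul_cancel_left₀ hc] using this
  have h2 : DifferentiableAt ℝ (fun t : ℝ => Real.log (Real.exp (-|t|))) 0 := by
    have hlog : DifferentiableAt ℝ Real.log (Real.exp (-|(0:ℝ)|)) :=
      Real.differentiableAt_log (Real.exp_ne_zero _)
    exact hlog.comp 0 h1
  have h3 : DifferentiableAt ℝ (fun t : ℝ => -|t|) 0 := by
    simpa [Real.log_exp] using h2
  have h4 : DifferentiableAt ℝ (fun t : ℝ => |t|) 0 := by
    simpa using h3.neg
  exact not_differentiableAt_abs_zero h4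

/-- Exponential-distance envelope functions with pairwise distinct centers are
linearly independent: if `∑ i, c i * exp (-‖W i - X‖) = 0` for all `X`, then
all coefficients vanish. -/
theorem exp_dist_linear_independent (d k : ℕ)
    (W : Fin k → EuclideanSpace ℝ (Fin d)) (hW : Function.Injective W)
    (c : Fin k → ℝ)
    (h : ∀ X : EuclideanSpace ℝ (Fin d),
      ∑ i, c i * Real.exp (-‖W i - X‖) = 0) :
    ∀ i, c i = 0 := by
  intro j
  rcases Nat.eq_zero_or_pos d with hd | hd
  · -- d = 0 : space is trivial, so k ≤ 1 by injectivity
    subst hd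
    have hsub : Subsingleton (EuclideanSpace ℝ (Fin 0)) := by
      constructor; intro a b; ext i; exact absurd i.2 (Nat.not_lt_zero _)
    have hone : ∀ i : Fin k, i = j := by
      intro i; exact hW (Subsingleton.elim _ _)
    have := h (W j)
    rw [Finset.sum_eq_single j] at this
    · simpa using this
    · intro b _ hb; exact absurd (hone b) hb
    · intro hj; exact absurd (Finset.mem_univ j) hj
  · -- d ≥ 1 : use a unit vector direction

    set v : EuclideanSpace ℝ (Fin d) := EuclideanSpace.single ⟨0, hd⟩ (1:ℝ) with hv
    have hvnorm : ‖v‖ = 1 := by simp [hv, EuclideanSpace.norm_single]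
    -- the sum of the other terms, as a function of t
    set F : ℝ → ℝ := fun t =>
      -∑ i ∈ Finset.univ.erase j, c i * Real.exp (-‖W i - (W j + t • v)‖) with hF
    have hFc : ∀ t : ℝ, c j * Real.exp (-|t|) = F t := by
      intro t
      have := h (W j + t • v)
      rw [← Finset.add_sum_erase _ _ (Finset.mem_univ j)] at this
      have hnorm : ‖W j - (W j + t • v)‖ = |t| := by
        have : W j - (W j + t • v) = -(t • v) := by abel
        rw [this, norm_neg, norm_smul, hvnorm]
        simp [Real.norm_eq_abs]
      rw [hnorm] at this
      simp only [hF]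
      linarith
    have hFd : DifferentiableAt ℝ F 0 := by
      apply DifferentiableAt.neg
      apply DifferentiableAt.fun_sum
      intro i hi
      have hij : i ≠ j := Finset.ne_of_mem_erase hi
      have hne : W i - (W j + (0:ℝ) • v) ≠ 0 := by
        simp only [zero_smul, add_zero, sub_ne_zero]
        exact fun hEq => hij (hW hEq)
      have hdiff : DifferentiableAt ℝ (fun t : ℝ => W i - (W j + t • v)) 0 := by
        apply DifferentiableAt.sub (differentiableAt_const _)
        exact (differentiableAt_const _).add ((differentiableAt_fun_id).smul_const v)
      have hnd : DifferentiableAt ℝ (fun t : ℝ => ‖W i - (W j + t • v)‖) 0 :=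
        hdiff.norm ℝ hne
      exact ((Real.differentiable_exp.differentiableAt).comp 0 hnd.neg).const_mul _
    have : DifferentiableAt ℝ (fun t : ℝ => c j * Real.exp (-|t|)) 0 := by
      apply hFd.congr_of_eventuallyEq
      exact Filter.Eventually.of_forall hFc
    exact aux_c_zero (c j) this
end

section
/- Univariate Gaussian densities with pairwise distinct (mean, variance) pairs are linearly independent: if (μ_1, ν_1), ..., (μ_k, ν_k) ∈ R × (0,∞) are pairwise distinct and Σ_{i=1}^k c_i f(y | μ_i, ν_i) = 0 for all y ∈ R, where f(y|μ,ν) = (2πν)^{-1/2} exp(-(y-μ)²/(2ν)), then c_1 = ... = c_k = 0. -/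
open Filter Real

/-- If A < 0, or A = 0 and B < 0, then exp(A y² + B y) → 0 as y → ∞. -/
lemma exp_quad_tendsto_zero {A B : ℝ} (hlt : A < 0 ∨ (A = 0 ∧ B < 0)) :
    Tendsto (fun y : ℝ => Real.exp (A * y ^ 2 + B * y)) atTop (nhds 0) := by
  have hbot : Tendsto (fun y : ℝ => A * y ^ 2 + B * y) atTop atBot := by
    rcases hlt with hA | ⟨hA, hB⟩
    · have h1 : Tendsto (fun y : ℝ => y * (A * y + B)) atTop atBot := by
        apply Filter.Tendsto.atTop_mul_atBot₀ tendsto_id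
        apply Filter.tendsto_atBot_add_const_right
        exact tendsto_id.const_mul_atTop_of_neg hA
      refine h1.congr fun y => by ring
    · have h1 : Tendsto (fun y : ℝ => B * y) atTop atBot :=
        tendsto_id.const_mul_atTop_of_neg hB
      refine h1.congr fun y => by rw [hA]; ring
  exact Real.tendsto_exp_atBot.comp hbot

/-- Functions exp(aᵢ y² + bᵢ y) with distinct (aᵢ, bᵢ) are linearly independent. -/
lemma exp_quad_linindep (k : ℕ) (a b : Fin k → ℝ)
    (hinj : Function.Injective (fun i => (a i, b i)))
    (e : Fin k → ℝ)
    (h : ∀ y : ℝ, ∑ i, e i * Real.exp (a i * y ^ 2 + b i * y) = 0) :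
    ∀ i, e i = 0 := by
  by_contra hcon
  push_neg at hcon
  obtain ⟨i₁, hi₁⟩ := hcon
  set S : Finset (Fin k) := Finset.univ.filter (fun i => e i ≠ 0) with hS
  have hSne : S.Nonempty := ⟨i₁, by simp [hS, hi₁]⟩
  obtain ⟨i₀, hi₀S, hmax⟩ :=
    S.exists_max_image (fun i => toLex (a i, b i)) hSne
  have he₀ : e i₀ ≠ 0 := by simpa [hS] using hi₀S
  -- rewrite the sum divided by exp(a i₀ y² + b i₀ y)
  have hy : ∀ y : ℝ,
      ∑ i, e i * Real.exp ((a i - a i₀) * y ^ 2 + (b i - b i₀) * y) = 0 := by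
    intro y
    have key : ∑ i, e i * Real.exp ((a i - a i₀) * y ^ 2 + (b i - b i₀) * y)
        = (∑ i, e i * Real.exp (a i * y ^ 2 + b i * y)) *
            Real.exp (-(a i₀ * y ^ 2 + b i₀ * y)) := by
      rw [Finset.sum_mul]
      refine Finset.sum_congr rfl fun i _ => ?_
      rw [mul_assoc, ← Real.exp_add]
      ring_nf
    rw [key, h y, zero_mul]
  -- each term tends to (if i = i₀ then e i₀ else 0)
  have hterm : ∀ i : Fin k,
      Tendsto (fun y : ℝ => e i * Real.exp ((a i - a i₀) * y ^ 2 + (b i - b i₀) * y))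
        atTop (nhds (if i = i₀ then e i₀ else 0)) := by
    intro i
    by_cases hii : i = i₀
    · subst hii
      simp only [sub_self, zero_mul, zero_add, Real.exp_zero, mul_one, if_pos rfl]
      exact tendsto_const_nhds
    · rw [if_neg hii]
      by_cases hei : e i = 0
      · simp only [hei, zero_mul]
        exact tendsto_const_nhds
      · have hiS : i ∈ S := by simp [hS, hei]
        have hle := hmax i hiS
        have hne : toLex (a i, b i) ≠ toLex (a i₀, b i₀) := by
          intro hEq
          exact hii (hinj (by simpa using hEq))
        have hltlex : toLex (a i, b i) < toLex (a i₀, b i₀) := lt_of_le_of_ne hle hne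
        rw [Prod.Lex.lt_iff] at hltlex
        have hcase : a i - a i₀ < 0 ∨ (a i - a i₀ = 0 ∧ b i - b i₀ < 0) := by
          rcases hltlex with h1 | ⟨h1, h2⟩
          · left; simp only [ofLex_toLex] at h1; linarith
          · right; constructor <;> [skip; (simp only [ofLex_toLex] at h2; linarith)]
            simp only [ofLex_toLex] at h1; linarith
        have := exp_quad_tendsto_zero hcase
        have := this.const_mul (e i)
        simpa using this
  have hsum : Tendsto
      (fun y : ℝ => ∑ i, e i * Real.exp ((a i - a i₀) * y ^ 2 + (b i - b i₀) * y))
      atTop (nhds (∑ i, if i = i₀ then e i₀ else 0)) :=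
    tendsto_finset_sum _ fun i _ => hterm i
  have hval : (∑ i : Fin k, if i = i₀ then e i₀ else 0) = e i₀ := by
    simp
  rw [hval] at hsum
  have hzero : Tendsto
      (fun y : ℝ => ∑ i, e i * Real.exp ((a i - a i₀) * y ^ 2 + (b i - b i₀) * y))
      atTop (nhds 0) := by
    have : (fun y : ℝ => ∑ i, e i * Real.exp ((a i - a i₀) * y ^ 2 + (b i - b i₀) * y))
        = fun _ => (0 : ℝ) := funext hy
    rw [this]
    exact tendsto_const_nhds
  exact he₀ (tendsto_nhds_unique hsum hzero)

/-- The univariate Gaussian density. -/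
noncomputable def gaussDensity (y μ ν : ℝ) : ℝ :=
  (Real.sqrt (2 * Real.pi * ν))⁻¹ * Real.exp (-(y - μ) ^ 2 / (2 * ν))

/-- Univariate Gaussian densities with pairwise distinct (mean, variance) pairs
are linearly independent. -/
theorem gaussian_linear_independent (k : ℕ)
    (μ : Fin k → ℝ) (ν : Fin k → ℝ) (hν : ∀ i, 0 < ν i)
    (hdist : Function.Injective (fun i => (μ i, ν i)))
    (c : Fin k → ℝ)
    (h : ∀ y : ℝ, ∑ i, c i * gaussDensity y (μ i) (ν i) = 0) :
    ∀ i, c i = 0 := by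
  set a : Fin k → ℝ := fun i => -(1 / (2 * ν i)) with ha
  set b : Fin k → ℝ := fun i => μ i / ν i with hb
  set e : Fin k → ℝ := fun i =>
    c i * (Real.sqrt (2 * Real.pi * ν i))⁻¹ * Real.exp (-(μ i) ^ 2 / (2 * ν i)) with he
  have hinj : Function.Injective (fun i => (a i, b i)) := by
    intro i j hEq
    simp only [Prod.mk.injEq, ha, hb] at hEq
    obtain ⟨h1, h2⟩ := hEq
    have hνi := (hν i).ne'
    have hνj := (hν j).ne'
    have hνeq : ν i = ν j := by
      field_simp at h1
      linarith
    have hμeq : μ i = μ j := by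
      rw [hνeq] at h2
      field_simp at h2
      exact h2
    exact hdist (by simp [hμeq, hνeq])
  have hterm : ∀ (i : Fin k) (y : ℝ),
      c i * gaussDensity y (μ i) (ν i) = e i * Real.exp (a i * y ^ 2 + b i * y) := by
    intro i y
    have hνi := (hν i).ne'
    have hE : (-(y - μ i) ^ 2 / (2 * ν i))
        = (-(μ i) ^ 2 / (2 * ν i)) + (a i * y ^ 2 + b i * y) := by
      rw [ha, hb]
      field_simp
      ring
    rw [he, ha, hb]
    simp only [gaussDensity, hE, Real.exp_add, ha, hb]
    ring
  have h' : ∀ y : ℝ, ∑ i, e i * Real.exp (a i * y ^ 2 + b i * y) = 0 := by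
    intro y
    rw [← h y]
    exact Finset.sum_congr rfl fun i _ => (hterm i y).symm
  have heall := exp_quad_linindep k a b hinj e h'
  intro i
  have := heall i
  rw [he] at this
  have hνi := hν i
  have hpos : (0 : ℝ) < (Real.sqrt (2 * Real.pi * ν i))⁻¹ := by
    apply inv_pos.mpr
    apply Real.sqrt_pos.mpr
    positivity
  have hexp : (0 : ℝ) < Real.exp (-(μ i) ^ 2 / (2 * ν i)) := Real.exp_pos _
  simp only at this
  rcases mul_eq_zero.mp this with h1 | h2
  · rcases mul_eq_zero.mp h1 with h3 | h4
    · exact h3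
    · exact absurd h4 hpos.ne'
  · exact absurd h2 hexp.ne'
end
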